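/- arXiv:2410.23115 — 5 statements merged into one kernel-verified Lean document; each statement's English description precedes it below -/
import Mathlib

section
/- Let p be a prime and n ≥ 1. Then there exist polynomials P, Q ∈ ℤ[X] such that p = P(X)·(X − 1)^{(p−1)p^{n−1}} + Q(X)·Φ_{p^n}(X), where Φ_{p^n} is the (p^n)-th cyclotomic polynomial. -/
/-!
Modulo `p`, `Φ_{p^n} = (X - 1)^d` with `d = (p - 1)p^(n-1)`, so `Φ_{p^n} = (X - 1)^d + p·R` for some
`R ∈ ℤ[X]`. Evaluating at `1` gives `R(1) = 1`, so `R` is coprime to `X - 1` and hence to `(X - 1)^d`;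
multiplying a Bézout identity `u·R + v·(X - 1)^d = 1` by `p` and substituting `p·R = Φ_{p^n} - (X - 1)^d`
expresses `p` as a combination of `(X - 1)^d` and `Φ_{p^n}`.
-/

open Polynomial

theorem Polynomial.isCoprime_X_sub_C_of_isUnit_eval {R : Type*} [CommRing R] {f : R[X]} {a : R}
    (h : IsUnit (f.eval a)) : IsCoprime f (X - C a) := by
  rw [← modByMonic_add_div f (X - C a), modByMonic_X_sub_C_eq_C_eval,
    IsCoprime.add_mul_left_left_iff]
  simpa using (isCoprime_mul_unit_left_left (h.map C) 1 (X - C a)).mpr isCoprime_one_left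

theorem Polynomial.C_dvd_iff_map_zmod_eq_zero (n : ℕ) (f : ℤ[X]) :
    C (n : ℤ) ∣ f ↔ f.map (Int.castRingHom (ZMod n)) = 0 := by
  rw [C_dvd_iff_dvd_coeff]
  simp [Polynomial.ext_iff, ZMod.intCast_zmod_eq_zero_iff_dvd]

theorem Polynomial.cyclotomic_prime_pow_eq_X_sub_one_pow (R : Type*) [Ring R] {p : ℕ}
    [Fact p.Prime] [CharP R p] {k : ℕ} (hk : 0 < k) :
    cyclotomic (p ^ k) R = (X - 1) ^ ((p - 1) * p ^ (k - 1)) := by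
  have h := cyclotomic_mul_prime_pow_eq R (m := 1) (Nat.Prime.not_dvd_one Fact.out) hk
  rw [mul_one, cyclotomic_one] at h
  rw [h, Nat.sub_one_mul, ← pow_succ', Nat.sub_add_cancel hk]

theorem exists_eq_mul_add_mul_of_isCoprime {A : Type*} [CommRing A] {f g c r : A}
    (h : f = g + c * r) (hr : IsCoprime r g) : ∃ P Q, c = P * g + Q * f := by
  obtain ⟨u, v, huv⟩ := hr
  exact ⟨c * v - u, u, by linear_combination -u * h - c * huv⟩

/-- For a prime `p` and `n ≥ 1`, there exist `P, Q ∈ ℤ[X]` with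
`p = P·(X − 1)^((p−1)p^(n−1)) + Q·Φ_{p^n}(X)`. -/
theorem exists_bezout_cyclotomic (p n : ℕ) (hp : p.Prime) (hn : 1 ≤ n) :
    ∃ P Q : Polynomial ℤ,
      (C (p : ℤ)) = P * (X - 1) ^ ((p - 1) * p ^ (n - 1)) + Q * cyclotomic (p ^ n) ℤ := by
  have := Fact.mk hp
  obtain ⟨R, hR⟩ : C (p : ℤ) ∣ cyclotomic (p ^ n) ℤ - (X - 1) ^ ((p - 1) * p ^ (n - 1)) := by
    rw [C_dvd_iff_map_zmod_eq_zero, Polynomial.map_sub, map_cyclotomic,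
      cyclotomic_prime_pow_eq_X_sub_one_pow _ hn]
    simp
  have hd : (p - 1) * p ^ (n - 1) ≠ 0 :=
    Nat.mul_ne_zero (Nat.sub_ne_zero_of_lt hp.one_lt) (pow_ne_zero _ hp.ne_zero)
  have hR1 : R.eval 1 = 1 := by
    obtain ⟨k, rfl⟩ := Nat.exists_eq_add_of_le' hn
    have h1 := congrArg (eval 1) hR
    rw [eval_sub, eval_one_cyclotomic_prime_pow, eval_pow, eval_sub, eval_X, eval_one, sub_self,
      zero_pow hd, sub_zero, eval_mul, eval_C] at h1
    exact (mul_eq_left₀ (by exact_mod_cast hp.ne_zero)).mp h1.symm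
  have hRX : IsCoprime R (X - C 1) := isCoprime_X_sub_C_of_isUnit_eval (by simp [hR1])
  rw [map_one] at hRX
  exact exists_eq_mul_add_mul_of_isCoprime (by rw [← hR]; ring) hRX.pow_right
end

section
/- Let p be a prime and R a commutative ℤ[q]-algebra which is p-torsion free and such that R/(q−1)^n R is p-torsion free for all n ≥ 1 (e.g. R flat over ℤ[q]). Let φ : R → R be a Frobenius lift with φ(q) = q^p, and δ(a) = (φ(a) − a^p)/p. Then for all n ≥ 1 and all y ∈ R, δ((q−1)^n · y) ∈ (q−1)^n · R. -/
open Polynomial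

/-- Let `R` be a `ℤ[q]`-algebra, `p`-torsion free and with `R/(q−1)^n R` `p`-torsion
free for all `n ≥ 1`, and let `φ` be a Frobenius lift with `φ(q) = q^p`, with
associated `δ(a) = (φ(a) − a^p)/p`.  Then `δ((q−1)^n·y) ∈ (q−1)^n·R` for all
`n ≥ 1` and `y ∈ R`. -/
theorem delta_q_sub_one_pow_mem {R : Type*} [CommRing R] [Algebra (Polynomial ℤ) R]
    (p : ℕ) (hp : p.Prime)
    (htf : ∀ a : R, (p : R) * a = 0 → a = 0)
    (htf' : ∀ n : ℕ, 1 ≤ n → ∀ a : R,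
      (p : R) * a ∈ Ideal.span {(algebraMap (Polynomial ℤ) R X - 1) ^ n} →
        a ∈ Ideal.span {(algebraMap (Polynomial ℤ) R X - 1) ^ n})
    (φ : R →+* R) (δ : R → R)
    (hφq : φ (algebraMap (Polynomial ℤ) R X) = algebraMap (Polynomial ℤ) R X ^ p)
    (hδ : ∀ a : R, φ a = a ^ p + (p : R) * δ a) :
    ∀ n : ℕ, 1 ≤ n → ∀ y : R,
      δ ((algebraMap (Polynomial ℤ) R X - 1) ^ n * y) ∈
        Ideal.span {(algebraMap (Polynomial ℤ) R X - 1) ^ n} := by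
  intro n hn y
  obtain ⟨m, rfl⟩ : ∃ m, p = m + 1 := ⟨p - 1, (Nat.succ_pred_eq_of_pos hp.pos).symm⟩
  set q : R := algebraMap (Polynomial ℤ) R X with hq
  set t : R := q - 1 with ht
  have hφt : φ t = (t + 1) ^ (m + 1) - 1 := by
    simp [ht, map_sub, hφq]
  have hdvd : t ∣ φ t := by
    rw [hφt]
    have := sub_dvd_pow_sub_pow (t + 1) 1 (m + 1)
    simpa using this
  obtain ⟨c, hc⟩ := hdvd
  apply htf' n hn
  rw [Ideal.mem_span_singleton]
  have hkey : ((m + 1 : ℕ) : R) * δ (t ^ n * y) = φ (t ^ n * y) - (t ^ n * y) ^ (m + 1) := by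
    linear_combination (hδ (t ^ n * y)).symm
  rw [hkey, map_mul, map_pow, hc]
  clear_value q t
  refine ⟨c ^ n * φ y - (t ^ n) ^ m * y ^ (m + 1), ?_⟩
  ring
end

section
/- Let R be a commutative ring, x, t ∈ R, and let p ≥ 2, α ≥ 2, n ≥ 1 be natural numbers. Then (x^p, t^{p−1})^{α·p^{n−1}} ⊆ (x^α, t)^{p^n}, i.e. the (α·p^{n−1})-th power of the ideal generated by x^p and t^{p−1} is contained in the (p^n)-th power of the ideal generated by x^α and t. -/
/-- Key numerical inequality: for `k ≤ α·p^(n−1)`,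
`p^n ≤ ⌊p·k/α⌋ + (p−1)·(α·p^(n−1) − k)`. -/
lemma ideal_pow_le_ideal_pow_key (p α n k : ℕ) (hp : 2 ≤ p) (hα : 2 ≤ α)
    (hn : 1 ≤ n) (hk : k ≤ α * p ^ (n - 1)) :
    p ^ n ≤ p * k / α + (p - 1) * (α * p ^ (n - 1) - k) := by
  set N := α * p ^ (n - 1) with hN
  set d := N - k with hd
  have hkd : k + d = N := by omega
  have hα0 : 0 < α := by omega
  obtain ⟨m, rfl⟩ : ∃ m, n = m + 1 := ⟨n - 1, by omega⟩
  rcases le_or_gt (p ^ (m + 1)) ((p - 1) * d) with h | h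
  · exact h.trans (Nat.le_add_left _ _)
  · -- p^n > (p-1)*d; show p^n - (p-1)*d ≤ p*k/α
    set Y := (p - 1) * d with hY
    set Z := p ^ (m + 1) - Y with hZ
    have hZY : Z + Y = p ^ (m + 1) := by omega
    have hpN : p * N = α * p ^ (m + 1) := by
      rw [hN]
      simp [pow_succ]
      ring
    have hpk : p * k + p * d = α * p ^ (m + 1) := by
      rw [← hpN, ← Nat.mul_add, hkd]
    have hpd : p * d ≤ α * Y := by
      have h1 : p ≤ α * (p - 1) := by
        have : 2 * (p - 1) ≤ α * (p - 1) := Nat.mul_le_mul_right _ hα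
        omega
      calc p * d ≤ (α * (p - 1)) * d := Nat.mul_le_mul_right _ h1
        _ = α * Y := by rw [hY]; ring
    have hαZ : α * Z + α * Y = α * p ^ (m + 1) := by
      rw [← Nat.mul_add, hZY]
    have hdiv : Z * α ≤ p * k := by nlinarith [hαZ, hpk, hpd]
    have hle : Z ≤ p * k / α := (Nat.le_div_iff_mul_le hα0).mpr hdiv
    omega

/-- For `p ≥ 2`, `α ≥ 2`, `n ≥ 1` and elements `x, t` of a commutative ring,
`(x^p, t^(p−1))^(α·p^(n−1)) ⊆ (x^α, t)^(p^n)`. -/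
theorem ideal_pow_le_ideal_pow {R : Type*} [CommRing R] (x t : R)
    (p α n : ℕ) (hp : 2 ≤ p) (hα : 2 ≤ α) (hn : 1 ≤ n) :
    (Ideal.span {x ^ p, t ^ (p - 1)}) ^ (α * p ^ (n - 1)) ≤
      (Ideal.span {x ^ α, t}) ^ (p ^ n) := by
  set N := α * p ^ (n - 1) with hN
  set J := Ideal.span {x ^ α, t} with hJ
  have hxa : x ^ α ∈ J := Ideal.subset_span (by simp)
  have ht : t ∈ J := Ideal.subset_span (by simp)
  have hmem : ∀ k ≤ N, (x ^ p) ^ k * (t ^ (p - 1)) ^ (N - k) ∈ J ^ (p ^ n) := by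
    intro k hk
    set q := p * k / α with hq
    have hx : x ^ (p * k) = (x ^ α) ^ q * x ^ (p * k % α) := by
      rw [← pow_mul, ← pow_add, Nat.div_add_mod]
    have h1 : (x ^ p) ^ k * (t ^ (p - 1)) ^ (N - k)
        = x ^ (p * k % α) * ((x ^ α) ^ q * t ^ ((p - 1) * (N - k))) := by
      rw [← pow_mul, ← pow_mul, hx]; ring
    rw [h1]
    refine Ideal.mul_mem_left _ _ ?_
    have h2 : (x ^ α) ^ q * t ^ ((p - 1) * (N - k)) ∈ J ^ (q + (p - 1) * (N - k)) := by
      rw [pow_add]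
      exact Ideal.mul_mem_mul (Ideal.pow_mem_pow hxa q) (Ideal.pow_mem_pow ht _)
    exact Ideal.pow_le_pow_right
      (ideal_pow_le_ideal_pow_key p α n k hp hα hn hk) h2
  rw [show ({x ^ p, t ^ (p - 1)} : Set R) = insert (x ^ p) {t ^ (p - 1)} from rfl,
    Ideal.span_insert, ← Ideal.add_eq_sup, add_pow, Ideal.sum_eq_sup]
  apply Finset.sup_le
  intro i hi
  have hiN : i ≤ N := by
    simpa [Nat.lt_succ_iff] using Finset.mem_range.mp hi
  refine le_trans Ideal.mul_le_left ?_
  rw [Ideal.span_singleton_pow, Ideal.span_singleton_pow,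
    Ideal.span_singleton_mul_span_singleton, Ideal.span_singleton_le_iff_mem]
  exact hmem i hiN
end

section
/- Let R be a commutative ring and let Y, Z be closed subsets of the prime spectrum Spec R such that no prime ideal x satisfies both x ⊆ z for some z ∈ Z and x ⊆ y for some y ∈ Y (i.e. no point of Z and point of Y have a common generalisation). Then there exist disjoint open subsets U ⊇ Z and V ⊇ Y of Spec R. -/
open PrimeSpectrum TopologicalSpace

/-- If two points of `Spec R` have no common generalisation, then there exist
`a ∉ z`, `b ∉ y` with `a * b = 0`. -/
lemma exists_mul_eq_zero_of_no_common_gen {R : Type*} [CommRing R]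
    (z y : PrimeSpectrum R)
    (h : ¬∃ x : PrimeSpectrum R, x.asIdeal ≤ z.asIdeal ∧ x.asIdeal ≤ y.asIdeal) :
    ∃ a b : R, a ∉ z.asIdeal ∧ b ∉ y.asIdeal ∧ a * b = 0 := by
  by_contra hc
  push_neg at hc
  have h0 : (0 : R) ∉ z.asIdeal.primeCompl ⊔ y.asIdeal.primeCompl := by
    rw [Submonoid.mem_sup]
    rintro ⟨a, ha, b, hb, hab⟩
    exact hc a b ha hb hab
  have hdisj : Disjoint ((⊥ : Ideal R) : Set R)
      (z.asIdeal.primeCompl ⊔ y.asIdeal.primeCompl : Submonoid R) := by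
    rw [Set.disjoint_left]
    rintro x hx
    simp only [Ideal.mem_bot, SetLike.mem_coe] at *
    rintro hxs
    exact h0 (hx ▸ hxs)
  obtain ⟨p, hp, -, hpd⟩ := Ideal.exists_le_prime_disjoint ⊥ _ hdisj
  refine h ⟨⟨p, hp⟩, ?_, ?_⟩ <;> intro x hx <;> by_contra hxz
  · exact Set.disjoint_left.mp hpd hx
      (SetLike.le_def.mp le_sup_left (show x ∈ z.asIdeal.primeCompl from hxz))
  · exact Set.disjoint_left.mp hpd hx
      (SetLike.le_def.mp le_sup_right (show x ∈ y.asIdeal.primeCompl from hxz))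

/-- If `Y, Z` are closed subsets of `Spec R` such that no point of `Z` and point of
`Y` admit a common generalisation (a prime contained in both), then `Z` and `Y`
can be separated by disjoint open sets. -/
theorem primeSpectrum_separation {R : Type*} [CommRing R]
    (Y Z : Set (PrimeSpectrum R)) (hY : IsClosed Y) (hZ : IsClosed Z)
    (h : ∀ z ∈ Z, ∀ y ∈ Y, ¬∃ x : PrimeSpectrum R,
      x.asIdeal ≤ z.asIdeal ∧ x.asIdeal ≤ y.asIdeal) :
    ∃ U V : Set (PrimeSpectrum R),
      IsOpen U ∧ IsOpen V ∧ Z ⊆ U ∧ Y ⊆ V ∧ U ∩ V = ∅ := by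
  have hYc : IsCompact Y := hY.isCompact
  have hZc : IsCompact Z := hZ.isCompact
  -- Step 1: separate each point of Z from Y
  have step1 : ∀ z ∈ Z, ∃ U V : Set (PrimeSpectrum R),
      IsOpen U ∧ IsOpen V ∧ z ∈ U ∧ Y ⊆ V ∧ U ∩ V = ∅ := by
    intro z hz
    choose a b ha hb hab using fun y : Y =>
      exists_mul_eq_zero_of_no_common_gen z y.1 (h z hz y.1 y.2)
    have hcover : Y ⊆ ⋃ y : Y, (basicOpen (b y) : Set (PrimeSpectrum R)) := by
      intro y hy
      exact Set.mem_iUnion.2 ⟨⟨y, hy⟩, hb ⟨y, hy⟩⟩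
    obtain ⟨t, ht⟩ := hYc.elim_finite_subcover _
      (fun y : Y => (basicOpen (b y)).isOpen) hcover
    refine ⟨⋂ y ∈ t, (basicOpen (a y) : Set (PrimeSpectrum R)),
      ⋃ y ∈ t, (basicOpen (b y) : Set (PrimeSpectrum R)), ?_, ?_, ?_, ht, ?_⟩
    · exact isOpen_biInter_finset fun y _ => (basicOpen (a y)).isOpen
    · exact isOpen_biUnion fun y _ => (basicOpen (b y)).isOpen
    · exact Set.mem_iInter₂.2 fun y _ => ha y
    · ext p
      simp only [Set.mem_inter_iff, Set.mem_iInter, Set.mem_iUnion,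
        Set.mem_empty_iff_false, iff_false, not_and]
      rintro hU ⟨y, hyt, hyp⟩
      have h1 : p ∈ basicOpen (a y) := hU y hyt
      have h2 : a y * b y ∉ p.asIdeal := by
        rw [← PrimeSpectrum.mem_basicOpen, PrimeSpectrum.basicOpen_mul]
        exact ⟨h1, hyp⟩
      exact h2 (hab y ▸ p.asIdeal.zero_mem)
  -- Step 2: use compactness of Z
  choose! U V hUo hVo hzU hYV hUV using step1
  have hcover : Z ⊆ ⋃ z : Z, U z := fun z hz =>
    Set.mem_iUnion.2 ⟨⟨z, hz⟩, hzU z hz⟩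
  obtain ⟨t, ht⟩ := hZc.elim_finite_subcover _
    (fun z : Z => hUo z.1 z.2) hcover
  refine ⟨⋃ z ∈ t, U z, ⋂ z ∈ t, V z, ?_, ?_, ht, ?_, ?_⟩
  · exact isOpen_biUnion fun z _ => hUo z.1 z.2
  · exact isOpen_biInter_finset fun z _ => hVo z.1 z.2
  · exact Set.subset_iInter₂ fun z _ => hYV z.1 z.2
  · ext p
    simp only [Set.mem_inter_iff, Set.mem_iUnion, Set.mem_iInter,
      Set.mem_empty_iff_false, iff_false, not_and]
    rintro ⟨z, hzt, hpU⟩ hV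
    have := hUV z.1 z.2
    have : p ∈ U z.1 ∩ V z.1 := ⟨hpU, hV z hzt⟩
    rw [hUV z.1 z.2] at this
    exact this
end

section
/- Let C be a closed symmetric monoidal category and f : X → Y a trace-class morphism with classifier η : 𝟙 → X^∨ ⊗ Y. Then the dual morphism f^∨ : Y^∨ → X^∨ is trace-class, with classifier given by the composite 𝟙 → X^∨ ⊗ Y → X^∨ ⊗ Y^{∨∨} = (Y^∨)^∨ ⊗ X^∨ (using η and the canonical map Y → Y^{∨∨}). -/
open CategoryTheory MonoidalCategory

variable {C : Type*} [Category C] [MonoidalCategory C] [SymmetricCategory C] [MonoidalClosed C]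

/-- The dual `X^∨ = [X, 𝟙]` of an object of a closed symmetric monoidal category. -/
noncomputable def dualObj (X : C) : C := (ihom X).obj (𝟙_ C)

/-- The evaluation `ev_X : X ⊗ X^∨ ⟶ 𝟙`. -/
noncomputable def evDual (X : C) : X ⊗ dualObj X ⟶ 𝟙_ C := (ihom.ev X).app (𝟙_ C)

/-- The composite `X ≅ X ⊗ 𝟙 ⟶ X ⊗ (X^∨ ⊗ Y) ≅ (X ⊗ X^∨) ⊗ Y ⟶ 𝟙 ⊗ Y ≅ Y`
determined by a classifier `η : 𝟙 ⟶ X^∨ ⊗ Y`. -/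
noncomputable def traceComposite {X Y : C} (η : 𝟙_ C ⟶ dualObj X ⊗ Y) : X ⟶ Y :=
  (ρ_ X).inv ≫ (X ◁ η) ≫ (α_ X (dualObj X) Y).inv ≫ (evDual X ▷ Y) ≫ (λ_ Y).hom

/-- A morphism is trace-class if it arises from some classifier `η : 𝟙 ⟶ X^∨ ⊗ Y`. -/
def IsTraceClass {X Y : C} (f : X ⟶ Y) : Prop :=
  ∃ η : 𝟙_ C ⟶ dualObj X ⊗ Y, f = traceComposite η

/-- The dual morphism `f^∨ : Y^∨ ⟶ X^∨`, induced by precomposition with `f`. -/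
noncomputable def dualMap {X Y : C} (f : X ⟶ Y) : dualObj Y ⟶ dualObj X :=
  (MonoidalClosed.pre f).app (𝟙_ C)

/-- The canonical double dual map `Y ⟶ Y^{∨∨}`. -/
noncomputable def doubleDual (Y : C) : Y ⟶ dualObj (dualObj Y) :=
  MonoidalClosed.curry ((β_ (dualObj Y) Y).hom ≫ evDual Y)

/-!
Uncurrying, `f^∨ = g` amounts to `f ▷ Y^∨ ≫ ev_Y = X ◁ g ≫ ev_X` as maps `X ⊗ Y^∨ ⟶ 𝟙`. When `f`
is built from `η` and `ev_X`, the interchange law lets `ev_X` and `ev_Y` act on disjoint factors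
of `X ⊗ (X^∨ ⊗ Y) ⊗ Y^∨`, so the equation holds for the map `g : Y^∨ ⟶ X^∨` built from the same `η`
and `ev_Y`. By symmetry, `g` is the trace composite of the braided classifier `𝟙 ⟶ Y ⊗ X^∨` for
the pairing `β ≫ ev_Y : Y^∨ ⊗ Y ⟶ 𝟙`, and the double-dual map `d` turns this pairing into
`ev_{Y^∨}`: `Y^∨ ◁ d ≫ ev_{Y^∨} = β ≫ ev_Y`.
-/

section Pairing

variable {D : Type*} [Category D] [MonoidalCategory D]

noncomputable def traceCompositeOf {A A' B : D} (e : A ⊗ A' ⟶ 𝟙_ D) (η : 𝟙_ D ⟶ A' ⊗ B) :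
    A ⟶ B :=
  (ρ_ A).inv ≫ (A ◁ η) ≫ (α_ A A' B).inv ≫ (e ▷ B) ≫ (λ_ B).hom

noncomputable def traceCompositeRightOf {A' B B' : D} (e : B ⊗ B' ⟶ 𝟙_ D)
    (η : 𝟙_ D ⟶ A' ⊗ B) : B' ⟶ A' :=
  (λ_ B').inv ≫ (η ▷ B') ≫ (α_ A' B B').hom ≫ (A' ◁ e) ≫ (ρ_ A').hom

theorem traceCompositeOf_comp_whiskerRight {A A' A'' B : D} (e : A ⊗ A'' ⟶ 𝟙_ D)
    (d : A' ⟶ A'') (η : 𝟙_ D ⟶ A' ⊗ B) :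
    traceCompositeOf e (η ≫ d ▷ B) = traceCompositeOf (A ◁ d ≫ e) η := by
  simp [traceCompositeOf]

theorem traceCompositeOf_whiskerRight_comp {A A' B B' : D} (eA : A ⊗ A' ⟶ 𝟙_ D)
    (eB : B ⊗ B' ⟶ 𝟙_ D) (η : 𝟙_ D ⟶ A' ⊗ B) :
    traceCompositeOf eA η ▷ B' ≫ eB = A ◁ traceCompositeRightOf eB η ≫ eA := by
  unfold traceCompositeOf traceCompositeRightOf
  calc
    _ = A ◁ (λ_ B').inv ≫ A ◁ (η ▷ B') ≫ A ◁ (α_ A' B B').hom ≫ (α_ A A' (B ⊗ B')).inv ≫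
          eA ▷ (B ⊗ B') ≫ (λ_ (B ⊗ B')).hom ≫ eB := by
      monoidal
    _ = A ◁ (λ_ B').inv ≫ A ◁ (η ▷ B') ≫ A ◁ (α_ A' B B').hom ≫ (α_ A A' (B ⊗ B')).inv ≫
          (A ⊗ A') ◁ eB ≫ eA ▷ 𝟙_ D ≫ (λ_ (𝟙_ D)).hom := by
      rw [whisker_exchange_assoc, leftUnitor_naturality]
    _ = _ := by
      monoidal

end Pairing

section Braided

open BraidedCategory

variable {D : Type*} [Category D] [MonoidalCategory D] [BraidedCategory D]

theorem rightUnitor_inv_comp_whiskerLeft (X : D) {Y : D} (θ : 𝟙_ D ⟶ Y) :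
    (ρ_ X).inv ≫ X ◁ θ = (λ_ X).inv ≫ θ ▷ X ≫ (β_ X Y).inv := by
  rw [← rightUnitor_inv_braiding_assoc, ← braiding_naturality_right_assoc, Iso.hom_inv_id,
    Category.comp_id]

theorem whiskerLeft_comp_rightUnitor_hom (X : D) {Y : D} (θ : Y ⟶ 𝟙_ D) :
    X ◁ θ ≫ (ρ_ X).hom = (β_ X Y).hom ≫ θ ▷ X ≫ (λ_ X).hom := by
  rw [← braiding_leftUnitor, ← braiding_naturality_right_assoc]

end Braided

open BraidedCategory SymmetricCategory in
theorem traceCompositeOf_braiding {D : Type*} [Category D] [MonoidalCategory D]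
    [SymmetricCategory D] {A' B B' : D} (e : B ⊗ B' ⟶ 𝟙_ D) (η : 𝟙_ D ⟶ A' ⊗ B) :
    traceCompositeOf ((β_ B' B).hom ≫ e) (η ≫ (β_ A' B).hom) = traceCompositeRightOf e η := by
  simp only [traceCompositeOf, traceCompositeRightOf, reassoc_of% rightUnitor_inv_comp_whiskerLeft,
    whiskerLeft_comp_rightUnitor_hom]
  -- what is left is an identity of braids, settled by the hexagon axioms and symmetry
  simp only [comp_whiskerRight, ← braiding_swap_eq_inv_braiding, braiding_tensor_left_hom,
    braiding_tensor_right_hom, Category.assoc, Iso.hom_inv_id_assoc, Iso.cancel_iso_inv_left]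
  rw [braiding_swap_eq_inv_braiding B B', hom_inv_whiskerRight_assoc]

section Closed

variable {D : Type*} [Category D] [MonoidalCategory D] [MonoidalClosed D]

theorem traceComposite_eq_traceCompositeOf {X Y : D} (η : 𝟙_ D ⟶ dualObj X ⊗ Y) :
    traceComposite η = traceCompositeOf (evDual X) η :=
  rfl

theorem uncurry_eq_whiskerLeft_comp_evDual {X Z : D} (g : Z ⟶ dualObj X) :
    MonoidalClosed.uncurry g = X ◁ g ≫ evDual X :=
  MonoidalClosed.uncurry_eq g

theorem uncurry_dualMap {X Y : D} (f : X ⟶ Y) :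
    MonoidalClosed.uncurry (dualMap f) = f ▷ dualObj Y ≫ evDual Y :=
  MonoidalClosed.uncurry_pre f (𝟙_ D)

end Closed

theorem whiskerLeft_doubleDual_comp_evDual (Y : C) :
    dualObj Y ◁ doubleDual Y ≫ evDual (dualObj Y) = (β_ (dualObj Y) Y).hom ≫ evDual Y := by
  rw [← uncurry_eq_whiskerLeft_comp_evDual, doubleDual, MonoidalClosed.uncurry_curry]

theorem dualMap_traceComposite {X Y : C} (η : 𝟙_ C ⟶ dualObj X ⊗ Y) :
    dualMap (traceComposite η) = traceComposite
      (η ≫ (dualObj X ◁ doubleDual Y) ≫ (β_ (dualObj X) (dualObj (dualObj Y))).hom) := by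
  apply MonoidalClosed.uncurry_injective
  rw [uncurry_dualMap, uncurry_eq_whiskerLeft_comp_evDual, traceComposite_eq_traceCompositeOf,
    traceComposite_eq_traceCompositeOf, traceCompositeOf_whiskerRight_comp, BraidedCategory.braiding_naturality_right,
    ← Category.assoc, traceCompositeOf_comp_whiskerRight, whiskerLeft_doubleDual_comp_evDual,
    traceCompositeOf_braiding]

/-- If `f : X ⟶ Y` is trace-class with classifier `η : 𝟙 ⟶ X^∨ ⊗ Y`, then the dual
`f^∨ : Y^∨ ⟶ X^∨` is trace-class, with classifier the composite
`𝟙 ⟶ X^∨ ⊗ Y ⟶ X^∨ ⊗ Y^{∨∨} ≅ (Y^∨)^∨ ⊗ X^∨`. -/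
theorem isTraceClass_dualMap {X Y : C} (f : X ⟶ Y) (η : 𝟙_ C ⟶ dualObj X ⊗ Y)
    (hf : f = traceComposite η) :
    IsTraceClass (dualMap f) ∧
      dualMap f = traceComposite
        (η ≫ (dualObj X ◁ doubleDual Y) ≫ (β_ (dualObj X) (dualObj (dualObj Y))).hom) := by
  subst hf
  exact ⟨⟨_, dualMap_traceComposite η⟩, dualMap_traceComposite η⟩
end
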